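/- arXiv:1801.00053 — 6 statements merged into one kernel-verified Lean document; each statement's English description precedes it below -/
import Mathlib

section
/- Let U be a finite set of monomials in M(x_1,...,x_n). Any monomial w admits at most one Janet divisor in U; that is, there is at most one u ∈ U such that w = u·v with every variable occurring in v being Janet-multiplicative for u with respect to U. -/
/-- The variable `x_i` is Janet-multiplicative for the monomial `u` with respect to the
finite set of monomials `U` (variables ordered `x_n > … > x_1`, i.e. by their index):
`u` has maximal `i`-degree among the monomials of `U` agreeing with `u` in all
degrees of index `> i`. -/
def JanetMult {n : ℕ} (U : Finset (Fin n → ℕ)) (u : Fin n → ℕ) (i : Fin n) : Prop :=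
  ∀ v ∈ U, (∀ j, i < j → v j = u j) → v i ≤ u i

/-- `u` is a Janet divisor of `w` with respect to `U`: `u ∈ U`, `u` divides `w`, and every
variable occurring in the quotient `w/u` is Janet-multiplicative for `u` w.r.t. `U`. -/
def JanetDiv {n : ℕ} (U : Finset (Fin n → ℕ)) (u w : Fin n → ℕ) : Prop :=
  u ∈ U ∧ u ≤ w ∧ ∀ i, u i < w i → JanetMult U u i

/-!
If `u ≠ u'` are Janet divisors of `w`, let `i` be the largest index where they differ, so both
lie in the same class `[α_{i+1}, …, α_n]`. If, say, `u i < u' i ≤ w i`, then `x_i` occurs in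
`w/u` and is Janet-multiplicative for `u`, so `u i` is maximal in that class, contradicting
`u i < u' i`.
-/

theorem Function.exists_ne_forall_gt_eq {ι α : Type*} [LinearOrder ι] [Finite ι]
    {f g : ι → α} (h : f ≠ g) : ∃ i, f i ≠ g i ∧ ∀ j, i < j → f j = g j := by
  obtain ⟨i₀, hi₀⟩ := Function.ne_iff.mp h
  obtain ⟨i, hi⟩ := (Set.toFinite {i | f i ≠ g i}).exists_maximal ⟨i₀, hi₀⟩
  exact ⟨i, hi.prop, fun j hij => not_not.mp fun hj => hi.not_gt hj hij⟩

theorem JanetDiv.le_of_forall_gt_eq {n : ℕ} {U : Finset (Fin n → ℕ)} {u v w : Fin n → ℕ}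
    {i : Fin n} (h : JanetDiv U u w) (hv : v ∈ U) (hvw : v ≤ w)
    (hagree : ∀ j, i < j → v j = u j) : v i ≤ u i := by
  by_contra! hlt
  exact hlt.not_ge (h.2.2 i (hlt.trans_le (hvw i)) v hv hagree)

/-- Any monomial `w` admits at most one Janet divisor in a finite set of monomials `U`. -/
theorem janet_divisor_unique {n : ℕ} (U : Finset (Fin n → ℕ)) (w u u' : Fin n → ℕ)
    (h : JanetDiv U u w) (h' : JanetDiv U u' w) : u = u' := by
  by_contra hne
  obtain ⟨i, hi, hagree⟩ := Function.exists_ne_forall_gt_eq hne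
  have hle : u i ≤ u' i := h'.le_of_forall_gt_eq h.1 h.2.1 hagree
  have hge : u' i ≤ u i := h.le_of_forall_gt_eq h'.1 h'.2.1 fun j hj => (hagree j hj).symm
  exact hi (le_antisymm hle hge)
end

section
/- For any finite set U of monomials in M(x_1,...,x_n), the set of all monomials decomposes as the disjoint union of the Janet involutive cone of U and the Janet involutive cone of the set of complementary monomials of U: M(x_1,...,x_n) = cone_J(U) ⊔ ᶜcone_J(U). -/
/-- The monomials of `U` agreeing with `w` in all degrees of index `> i`
(Janet's class `[α_{i+1},…,α_n]`). -/
def JanetClass {n : ℕ} (U : Finset (Fin n → ℕ)) (i : Fin n) (w : Fin n → ℕ) :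
    Finset (Fin n → ℕ) :=
  U.filter (fun v => ∀ j, i < j → v j = w j)

/-- The `i`-th set of complementary monomials of `U`: monomials
`x_i^β x_{i+1}^{α_{i+1}} ⋯ x_n^{α_n}` such that the class `[α_{i+1},…,α_n]` is nonempty,
`β < deg_i([α_{i+1},…,α_n])` and `[β,α_{i+1},…,α_n] = ∅`. -/
def JanetComp {n : ℕ} (U : Finset (Fin n → ℕ)) (i : Fin n) : Set (Fin n → ℕ) :=
  {w | (∀ j, j < i → w j = 0) ∧ (JanetClass U i w).Nonempty ∧
       w i < (JanetClass U i w).sup (fun v => v i) ∧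
       ∀ v ∈ JanetClass U i w, v i ≠ w i}

/-- Multiplicative variables of a complementary monomial `w ∈ ᶜ(U)_i`:
all variables of index `< i`, together with the Janet-multiplicative variables of
index `> i` of the class `[α_{i+1},…,α_n]` of `w`. -/
def JanetCompMult {n : ℕ} (U : Finset (Fin n → ℕ)) (i : Fin n) (w : Fin n → ℕ)
    (j : Fin n) : Prop :=
  j < i ∨ (i < j ∧ ∃ u ∈ JanetClass U i w, JanetMult U u j)

/-- The Janet involutive cone of `U`: monomials admitting a Janet divisor in `U`. -/
def JanetCone {n : ℕ} (U : Finset (Fin n → ℕ)) : Set (Fin n → ℕ) :=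
  {w | ∃ u, JanetDiv U u w}

/-- The involutive cone of the set of complementary monomials of `U`: monomials of the
form `w·v` with `w` a complementary monomial and `v` a product of multiplicative
variables of `w`. -/
def JanetCompCone {n : ℕ} (U : Finset (Fin n → ℕ)) : Set (Fin n → ℕ) :=
  {w' | ∃ i, ∃ w ∈ JanetComp U i, w ≤ w' ∧ ∀ j, w j < w' j → JanetCompMult U i w j}

/-!
A Janet divisor of `w` can be searched for greedily, from `x_n` down to `x_1`: once the degrees
above `i` are fixed, the candidates form the class `[α_{i+1},…,α_n]`, and at `x_i` one keeps the
degree `w_i` if some candidate has it, or else the top degree `d` of the class if `d ≤ w_i`. The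
search fails only when `w_i < d` and no candidate has degree `w_i`, which says exactly that `w`
lies in the cone of the complementary monomial `x_i^{w_i} x_{i+1}^{α_{i+1}} ⋯ x_n^{α_n}`.
Conversely, a Janet divisor of a monomial in that cone is forced, by downward induction on the
index, to agree with it above `i`; it then lies in the class, so its `i`-degree would be both
`< w_i` and `≥ d > w_i`.
-/

section Janet

variable {n : ℕ} {U : Finset (Fin n → ℕ)}

theorem mem_janetClass {i : Fin n} {w v : Fin n → ℕ} :
    v ∈ JanetClass U i w ↔ v ∈ U ∧ ∀ j, i < j → v j = w j :=
  Finset.mem_filter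

theorem self_mem_janetClass {u : Fin n → ℕ} (hu : u ∈ U) (i : Fin n) : u ∈ JanetClass U i u :=
  mem_janetClass.2 ⟨hu, fun _ _ => rfl⟩

theorem janetClass_congr {i : Fin n} {w w' : Fin n → ℕ} (h : ∀ j, i < j → w j = w' j) :
    JanetClass U i w = JanetClass U i w' :=
  Finset.filter_congr fun _ _ =>
    ⟨fun hv j hj => (hv j hj).trans (h j hj), fun hv j hj => (hv j hj).trans (h j hj).symm⟩

theorem janetClass_mono {i j : Fin n} (hij : i ≤ j) (w : Fin n → ℕ) :
    JanetClass U i w ⊆ JanetClass U j w := fun _ hv =>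
  let ⟨hvU, hagree⟩ := mem_janetClass.1 hv
  mem_janetClass.2 ⟨hvU, fun k hk => hagree k (hij.trans_lt hk)⟩

theorem janetClass_eq_of_mem {i : Fin n} {w v : Fin n → ℕ} (hv : v ∈ JanetClass U i w) :
    JanetClass U i v = JanetClass U i w :=
  janetClass_congr (mem_janetClass.1 hv).2

theorem janetMult_iff {u : Fin n → ℕ} {i : Fin n} :
    JanetMult U u i ↔ ∀ v ∈ JanetClass U i u, v i ≤ u i := by
  simp only [JanetMult, mem_janetClass, and_imp]

theorem janetMult_iff_sup_le {u : Fin n → ℕ} {i : Fin n} :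
    JanetMult U u i ↔ (JanetClass U i u).sup (· i) ≤ u i := by
  rw [janetMult_iff, Finset.sup_le_iff]

theorem janetMult_congr {u u' : Fin n → ℕ} {i : Fin n} (h : ∀ j, i ≤ j → u j = u' j) :
    JanetMult U u i ↔ JanetMult U u' i := by
  rw [janetMult_iff_sup_le, janetMult_iff_sup_le, h i le_rfl,
    janetClass_congr fun j hj => h j hj.le]

def JanetDivFrom (U : Finset (Fin n → ℕ)) (k : ℕ) (u w : Fin n → ℕ) : Prop :=
  ∀ j : Fin n, k ≤ j → u j ≤ w j ∧ (u j < w j → JanetMult U u j)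

theorem JanetDivFrom.of_mem_janetClass {i : Fin n} {u v w : Fin n → ℕ}
    (hu : JanetDivFrom U (i + 1) u w) (hv : v ∈ JanetClass U i u) :
    JanetDivFrom U (i + 1) v w := by
  intro j hj
  have hij : i < j := Fin.lt_def.2 hj
  have hagree : ∀ k, j ≤ k → v k = u k := fun k hk => (mem_janetClass.1 hv).2 k (hij.trans_le hk)
  rw [hagree j le_rfl, janetMult_congr hagree]
  exact hu j hj

theorem mem_janetCompCone_of_janetDivFrom {i : Fin n} {u w : Fin n → ℕ} (hu : u ∈ U)
    (hdiv : JanetDivFrom U (i + 1) u w) (hlt : w i < (JanetClass U i u).sup (· i))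
    (hne : ∀ v ∈ JanetClass U i u, v i ≠ w i) : w ∈ JanetCompCone U := by
  obtain ⟨w₀, hbelow, hw₀i, habove⟩ : ∃ w₀ : Fin n → ℕ,
      (∀ j, j < i → w₀ j = 0) ∧ w₀ i = w i ∧ ∀ j, i < j → w₀ j = u j :=
    ⟨fun j => if j < i then 0 else if j = i then w i else u j, fun j hj => by simp [hj],
      by simp, fun j hj => by simp [hj.not_gt, hj.ne']⟩
  have hclass : JanetClass U i w₀ = JanetClass U i u := janetClass_congr habove
  refine ⟨i, w₀, ⟨hbelow, ?_, ?_, ?_⟩, fun j => ?_, fun j hj => ?_⟩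
  · exact hclass ▸ ⟨u, self_mem_janetClass hu i⟩
  · rwa [hclass, hw₀i]
  · rwa [hclass, hw₀i]
  · rcases lt_trichotomy j i with hj | rfl | hj
    · simp [hbelow j hj]
    · exact hw₀i.le
    · exact habove j hj ▸ (hdiv j (Fin.lt_def.1 hj)).1
  · rcases lt_trichotomy j i with hji | rfl | hji
    · exact Or.inl hji
    · exact absurd hw₀i hj.ne
    · rw [habove j hji] at hj
      exact Or.inr ⟨hji, u, hclass ▸ self_mem_janetClass hu i, (hdiv j (Fin.lt_def.1 hji)).2 hj⟩

theorem JanetDivFrom.exists_or_mem_janetCompCone {i : Fin n} {u w : Fin n → ℕ} (hu : u ∈ U)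
    (hdiv : JanetDivFrom U (i + 1) u w) :
    (∃ v ∈ U, JanetDivFrom U i v w) ∨ w ∈ JanetCompCone U := by
  suffices h : (∃ v ∈ JanetClass U i u, v i ≤ w i ∧ (v i < w i → JanetMult U v i)) ∨
      w ∈ JanetCompCone U by
    refine h.imp_left fun ⟨v, hv, hvi⟩ => ⟨v, (mem_janetClass.1 hv).1, fun j hj => ?_⟩
    rcases (Fin.le_iff_val_le_val.2 hj).eq_or_lt with rfl | hij
    · exact hvi
    · exact hdiv.of_mem_janetClass hv j (Fin.lt_def.1 hij)
  by_cases hlt : w i < (JanetClass U i u).sup (· i)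
  · by_cases hex : ∃ v ∈ JanetClass U i u, v i = w i
    · obtain ⟨v, hv, hvi⟩ := hex
      exact Or.inl ⟨v, hv, hvi.le, fun h => absurd hvi h.ne⟩
    · exact Or.inr (mem_janetCompCone_of_janetDivFrom hu hdiv hlt fun v hv h => hex ⟨v, hv, h⟩)
  · obtain ⟨v, hv, hvi⟩ :=
      Finset.exists_mem_eq_sup _ ⟨u, self_mem_janetClass hu i⟩ (fun v : Fin n → ℕ => v i)
    refine Or.inl ⟨v, hv, hvi ▸ not_lt.1 hlt, fun _ => ?_⟩
    rw [janetMult_iff_sup_le, janetClass_eq_of_mem hv, hvi]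

theorem janetCone_union_janetCompCone (hU : U.Nonempty) (w : Fin n → ℕ) :
    w ∈ JanetCone U ∨ w ∈ JanetCompCone U := by
  suffices h : ∀ k ≤ n, (∃ u ∈ U, JanetDivFrom U k u w) ∨ w ∈ JanetCompCone U by
    refine (h 0 n.zero_le).imp_left fun ⟨u, hu, hdiv⟩ =>
      ⟨u, hu, fun j => (hdiv j j.val.zero_le).1, fun j => (hdiv j j.val.zero_le).2⟩
  intro k hk
  induction hk using Nat.decreasingInduction with
  | self =>
    obtain ⟨u, hu⟩ := hU
    exact Or.inl ⟨u, hu, fun j hj => absurd j.isLt hj.not_gt⟩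
  | of_succ k hk ih =>
    rcases ih with ⟨u, hu, hdiv⟩ | hcomp
    · exact JanetDivFrom.exists_or_mem_janetCompCone (i := ⟨k, hk⟩) hu hdiv
    · exact Or.inr hcomp

theorem JanetDiv.eq_of_mem_janetComp {i j : Fin n} {u w w₀ : Fin n → ℕ} (hu : JanetDiv U u w)
    (hw₀ : w₀ ∈ JanetComp U i) (hle : w₀ ≤ w) (hmult : ∀ j, w₀ j < w j → JanetCompMult U i w₀ j)
    (hij : i < j) (habove : ∀ k, j < k → u k = w₀ k) : u j = w₀ j := by
  obtain ⟨huU, huw, hudiv⟩ := hu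
  have hclass : JanetClass U j u = JanetClass U j w₀ := janetClass_congr habove
  have hsub : JanetClass U i w₀ ⊆ JanetClass U j u := hclass ▸ janetClass_mono hij.le w₀
  rcases (hle j).lt_or_eq with hlt | heq
  · obtain hji | ⟨-, u', hu', hmult'⟩ := hmult j hlt
    · exact absurd hji hij.not_gt
    have hu'j : u' j = w₀ j := (mem_janetClass.1 hu').2 j hij
    have hu'class : JanetClass U j u' = JanetClass U j u := janetClass_eq_of_mem (hsub hu')
    have hle' : u j ≤ u' j :=
      janetMult_iff.1 hmult' u (hu'class ▸ self_mem_janetClass huU j)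
    have hge : u' j ≤ u j := janetMult_iff.1 (hudiv j (hle'.trans_lt (hu'j ▸ hlt))) u' (hsub hu')
    omega
  · obtain ⟨v₀, hv₀⟩ := hw₀.2.1
    have hv₀j : v₀ j = w₀ j := (mem_janetClass.1 hv₀).2 j hij
    refine le_antisymm (heq ▸ huw j) (not_lt.1 fun hlt => ?_)
    have := janetMult_iff.1 (hudiv j (heq ▸ hlt)) v₀ (hsub hv₀)
    omega

theorem janetCone_disjoint_janetCompCone {w : Fin n → ℕ} (hw : w ∈ JanetCone U) :
    w ∉ JanetCompCone U := by
  rintro ⟨i, w₀, hw₀, hle, hmult⟩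
  obtain ⟨u, hu⟩ := hw
  have habove : ∀ j, i < j → u j = w₀ j := fun j =>
    WellFoundedGT.induction (motive := fun j => i < j → u j = w₀ j) j fun j ih hij =>
      hu.eq_of_mem_janetComp hw₀ hle hmult hij fun k hjk => ih k hjk (hij.trans hjk)
  obtain ⟨huU, huw, hudiv⟩ := hu
  obtain ⟨-, -, hlt, hne⟩ := hw₀
  have hucls : u ∈ JanetClass U i w₀ := mem_janetClass.2 ⟨huU, habove⟩
  have hw₀i : w₀ i = w i :=
    (hle i).eq_or_lt.resolve_right fun h => by rcases hmult i h with h | ⟨h, -⟩ <;> exact h.false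
  have hui : u i < w i := (huw i).lt_of_ne fun h => hne u hucls (h.trans hw₀i.symm)
  have hsup := janetMult_iff_sup_le.1 (hudiv i hui)
  rw [janetClass_congr habove] at hsup
  omega

end Janet

/-- For a nonempty finite set of monomials `U`, the set of all monomials is the disjoint
union of the Janet involutive cone of `U` and of the involutive cone of the set of
complementary monomials of `U`. -/
theorem janet_cone_comp_cone_partition {n : ℕ} (U : Finset (Fin n → ℕ))
    (hU : U.Nonempty) :
    ∀ w : Fin n → ℕ, w ∈ JanetCone U ↔ w ∉ JanetCompCone U :=
  fun w => ⟨janetCone_disjoint_janetCompCone, (janetCone_union_janetCompCone hU w).resolve_right⟩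
end

section
/- A finite set U of monomials is complete (i.e. cone(U) = cone_J(U)) if and only if for every u ∈ U and every variable x that is non-multiplicative for u with respect to U, the monomial u·x belongs to the Janet involutive cone cone_J(U). -/
/-- The cone of `U`: all multiples of monomials of `U`. -/
def MonCone {n : ℕ} (U : Finset (Fin n → ℕ)) : Set (Fin n → ℕ) :=
  {w | ∃ u ∈ U, u ≤ w}

section Janet

variable {n : ℕ} {U : Finset (Fin n → ℕ)} {u v w : Fin n → ℕ} {i : Fin n}

lemma JanetDiv.mem_monCone (h : JanetDiv U u w) : w ∈ MonCone U :=
  ⟨u, h.1, h.2.1⟩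

lemma janetCone_subset_monCone (U : Finset (Fin n → ℕ)) : JanetCone U ⊆ MonCone U :=
  fun _ ⟨_, h⟩ => h.mem_monCone

lemma JanetDiv.toColex_le (hv : JanetDiv U v w) (hu : u ∈ U) (huw : u ≤ w) :
    toColex u ≤ toColex v := by
  refine not_lt.mp fun ⟨m, habove, hm⟩ => ?_
  have hmult : JanetMult U v m := hv.2.2 m (hm.trans_le (huw m))
  exact (hmult u hu fun j hj => (habove j hj).symm).not_gt hm

lemma add_single_le (huw : u ≤ w) (hi : u i < w i) : u + Pi.single i 1 ≤ w := by
  intro j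
  rcases eq_or_ne j i with rfl | hj
  · simpa using hi
  · simpa [hj] using huw j

lemma JanetDiv.janetMult_of_add_single (h : JanetDiv U u (u + Pi.single i 1)) :
    JanetMult U u i :=
  h.2.2 i (by simp)

lemma janetDiv_of_isMax_toColex
    (hU : ∀ u ∈ U, ∀ i, ¬ JanetMult U u i → u + Pi.single i 1 ∈ JanetCone U)
    (hu : u ∈ U) (huw : u ≤ w) (hmax : ∀ v ∈ U, v ≤ w → toColex v ≤ toColex u) :
    JanetDiv U u w := by
  refine ⟨hu, huw, fun i hi => ?_⟩
  by_contra hnm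
  obtain ⟨v, hv⟩ := hU u hu i hnm
  have hvu : v = u := toColex_inj.mp <|
    (hmax v hv.1 (hv.2.1.trans (add_single_le huw hi))).antisymm
      (hv.toColex_le hu (le_self_add))
  exact hnm (hvu ▸ hv).janetMult_of_add_single

end Janet

/-- A finite set `U` of monomials is complete (`cone(U) = cone_J(U)`) if and only if for
every `u ∈ U` and every variable `x_i` non-multiplicative for `u` w.r.t. `U`, the
monomial `u·x_i` lies in the Janet involutive cone of `U`. -/
theorem janet_complete_iff (n : ℕ) (U : Finset (Fin n → ℕ)) :
    MonCone U = JanetCone U ↔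
      ∀ u ∈ U, ∀ i : Fin n, ¬ JanetMult U u i →
        (u + Pi.single i 1) ∈ JanetCone U := by
  refine ⟨fun h u hu i _ => h ▸ ⟨u, hu, le_self_add⟩, fun hU => ?_⟩
  refine (janetCone_subset_monCone U).antisymm' fun w ⟨u₀, hu₀, hu₀w⟩ => ?_
  classical
  obtain ⟨u, hu, hmax⟩ := (U.filter (· ≤ w)).exists_max_image toColex ⟨u₀, by simp [hu₀, hu₀w]⟩
  rw [Finset.mem_filter] at hu
  exact ⟨u, janetDiv_of_isMax_toColex hU hu.1 hu.2 fun v hv hvw => hmax v (by simp [hv, hvw])⟩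
end

section
/- Let I be a continuous involutive division. A subset U of M(x_1,...,x_n) is locally I-involutive if and only if it is I-involutive. -/
/-- The six Gerdt–Blinkov axioms for an involutive division, given as a relation
`d U u w` (read: `u` is an involutive divisor of `w` with respect to `U`) defined for
every finite set of monomials `U` and `u ∈ U`. -/
def IsInvolutiveDivision (n : ℕ)
    (d : Finset (Fin n → ℕ) → (Fin n → ℕ) → (Fin n → ℕ) → Prop) : Prop :=
  (∀ U u w, d U u w → u ∈ U ∧ u ≤ w) ∧
  (∀ (U : Finset (Fin n → ℕ)) u, u ∈ U → d U u u) ∧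
  (∀ (U : Finset (Fin n → ℕ)) u, u ∈ U →
      ∀ v w : Fin n → ℕ, (d U u (u + v) ∧ d U u (u + w)) ↔ d U u (u + v + w)) ∧
  (∀ (U : Finset (Fin n → ℕ)) u u' w, d U u w → d U u' w → d U u u' ∨ d U u' u) ∧
  (∀ (U : Finset (Fin n → ℕ)) u u' w, d U u u' → d U u' w → d U u w) ∧
  (∀ (U U' : Finset (Fin n → ℕ)) u w, U' ⊆ U → u ∈ U' → d U u w → d U' u w)

/-- `U` is involutive for the division `d`: its cone coincides with its involutive cone. -/
def IsInvolutiveSet {n : ℕ} (d : Finset (Fin n → ℕ) → (Fin n → ℕ) → (Fin n → ℕ) → Prop)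
    (U : Finset (Fin n → ℕ)) : Prop :=
  MonCone U = {w | ∃ u, d U u w}

/-- `U` is locally involutive for `d`: every non-multiplicative prolongation `u·x_i`
of an element `u` of `U` admits an involutive divisor in `U`. -/
def IsLocallyInvolutiveSet {n : ℕ}
    (d : Finset (Fin n → ℕ) → (Fin n → ℕ) → (Fin n → ℕ) → Prop)
    (U : Finset (Fin n → ℕ)) : Prop :=
  ∀ u ∈ U, ∀ i : Fin n, ¬ d U u (u + Pi.single i 1) →
    ∃ v ∈ U, d U v (u + Pi.single i 1)

/-- The division `d` is continuous: in any finite chain `u_1, …, u_{k+1}` of elements of a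
finite set `U` in which each `u_{j+1}` involutively divides a non-multiplicative
prolongation `u_j·x_{i_j}` of `u_j`, the monomials `u_j` are pairwise distinct. -/
def IsContinuousDivision {n : ℕ}
    (d : Finset (Fin n → ℕ) → (Fin n → ℕ) → (Fin n → ℕ) → Prop) : Prop :=
  ∀ (U : Finset (Fin n → ℕ)) (k : ℕ) (u : Fin (k + 1) → Fin n → ℕ) (x : Fin k → Fin n),
    (∀ j, u j ∈ U) →
    (∀ j : Fin k, ¬ d U (u j.castSucc) (u j.castSucc + Pi.single (x j) 1)) →
    (∀ j : Fin k, d U (u j.succ) (u j.castSucc + Pi.single (x j) 1)) →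
    Function.Injective u

/-! If `w` lies in the cone of `U` but has no involutive divisor, then every `u ∈ U` dividing `w`
has a non-multiplicative variable `x_i` occurring in `w / u` (the multiplicative variables of `u`
generate the monomials that `u` involutively divides), and local involutivity supplies an
involutive divisor `v ≤ u·x_i ≤ w` in `U`. Starting from any divisor of `w` this never stops,
so it produces chains in `U` longer than `#U`, contradicting continuity. -/

def IsChainStep {n : ℕ} (d : Finset (Fin n → ℕ) → (Fin n → ℕ) → (Fin n → ℕ) → Prop)
    (U : Finset (Fin n → ℕ)) (u v : Fin n → ℕ) : Prop :=
  ∃ i, ¬ d U u (u + Pi.single i 1) ∧ d U v (u + Pi.single i 1)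

variable {n : ℕ} {d : Finset (Fin n → ℕ) → (Fin n → ℕ) → (Fin n → ℕ) → Prop}
  {U : Finset (Fin n → ℕ)} {u w : Fin n → ℕ}

namespace IsInvolutiveDivision

theorem setOf_dvd_subset_monCone (hd : IsInvolutiveDivision n d) :
    {w | ∃ u, d U u w} ⊆ MonCone U :=
  fun _ ⟨u, hu⟩ => ⟨u, hd.1 U u _ hu⟩

theorem dvd_add_of_forall_single (hd : IsInvolutiveDivision n d) (hu : u ∈ U)
    {v : Fin n → ℕ} (hv : ∀ i, 0 < v i → d U u (u + Pi.single i 1)) : d U u (u + v) := by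
  -- the axioms make `{v | d U u (u + v)}` an additive submonoid
  let S : AddSubmonoid (Fin n → ℕ) :=
    { carrier := {v | d U u (u + v)}
      zero_mem' := by simpa using hd.2.1 U u hu
      add_mem' := fun ha hb => by
        change d U u (u + (_ + _))
        rw [← add_assoc]
        exact (hd.2.2.1 U u hu _ _).1 ⟨ha, hb⟩ }
  change v ∈ S
  rw [← Finset.univ_sum_single v]
  refine S.sum_mem fun i _ => ?_
  rcases (v i).eq_zero_or_pos with hi | hi
  · simp [hi]
  · rw [← mul_one (v i), ← smul_eq_mul, Pi.single_smul']
    exact S.nsmul_mem (hv i hi) _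

theorem exists_not_dvd_prolongation_le (hd : IsInvolutiveDivision n d) (hu : u ∈ U)
    (hle : u ≤ w) (hnd : ¬ d U u w) :
    ∃ i, u + Pi.single i 1 ≤ w ∧ ¬ d U u (u + Pi.single i 1) := by
  by_contra! h
  refine hnd (add_tsub_cancel_of_le hle ▸ hd.dvd_add_of_forall_single hu fun i hi => h i ?_)
  intro j
  rcases eq_or_ne j i with rfl | hji
  · simp only [Pi.add_apply, Pi.single_eq_same, Pi.sub_apply] at hi ⊢
    omega
  · simpa [Pi.single_eq_of_ne hji] using hle j

end IsInvolutiveDivision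

theorem IsLocallyInvolutiveSet.exists_chainStep_le (hd : IsInvolutiveDivision n d)
    (hloc : IsLocallyInvolutiveSet d U) (hu : u ∈ U) (hle : u ≤ w) (hnd : ¬ d U u w) :
    ∃ v ∈ U, v ≤ w ∧ IsChainStep d U u v := by
  obtain ⟨i, hle', hnm⟩ := hd.exists_not_dvd_prolongation_le hu hle hnd
  obtain ⟨v, hv, hvd⟩ := hloc u hu i hnm
  exact ⟨v, hv, (hd.1 U v _ hvd).2.trans hle', i, hnm, hvd⟩

/-- Iterating the steps gives a chain of length `#U + 1` in `U`, which cannot be injective. -/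
theorem IsContinuousDivision.not_forall_exists_chainStep (hcont : IsContinuousDivision d)
    {P : Set (Fin n → ℕ)} (hPU : P ⊆ U) (hu : u ∈ P) :
    ¬ ∀ u ∈ P, ∃ v ∈ P, IsChainStep d U u v := by
  intro hstep
  choose! next hnext hstep using hstep
  set chain : ℕ → Fin n → ℕ := fun m => next^[m] u
  have hchain : ∀ m, chain m ∈ P := fun m => (Set.MapsTo.iterate hnext m) hu
  have hsucc : ∀ m, chain (m + 1) = next (chain m) := fun m =>
    Function.iterate_succ_apply' next m u
  have hinj : Function.Injective fun j : Fin (U.card + 1) => chain j :=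
    hcont U _ _ (fun j => (hstep _ (hchain j)).choose) (fun j => hPU (hchain j))
      (fun j => (hstep _ (hchain j)).choose_spec.1)
      (fun j => by simpa [hsucc] using (hstep _ (hchain j)).choose_spec.2)
  simpa using Finset.card_le_card_of_injOn (s := Finset.univ)
    (fun j : Fin (U.card + 1) => chain j) (fun j _ => hPU (hchain j)) hinj.injOn

theorem IsInvolutiveSet.isLocallyInvolutiveSet (hd : IsInvolutiveDivision n d)
    (hinv : IsInvolutiveSet d U) : IsLocallyInvolutiveSet d U := by
  intro u hu i _
  have hmem : u + Pi.single i 1 ∈ MonCone U := ⟨u, hu, le_self_add⟩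
  rw [hinv] at hmem
  obtain ⟨v, hv⟩ := hmem
  exact ⟨v, (hd.1 U v _ hv).1, hv⟩

/-- For a continuous involutive division, a finite set of monomials is locally involutive
if and only if it is involutive. -/
theorem locally_involutive_iff_involutive (n : ℕ)
    (d : Finset (Fin n → ℕ) → (Fin n → ℕ) → (Fin n → ℕ) → Prop)
    (hd : IsInvolutiveDivision n d) (hcont : IsContinuousDivision d)
    (U : Finset (Fin n → ℕ)) :
    IsLocallyInvolutiveSet d U ↔ IsInvolutiveSet d U := by
  refine ⟨fun hloc => ?_, IsInvolutiveSet.isLocallyInvolutiveSet hd⟩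
  refine Set.Subset.antisymm (fun w ⟨u, hu, hle⟩ => ?_) hd.setOf_dvd_subset_monCone
  by_contra hw
  refine hcont.not_forall_exists_chainStep (P := {v | v ∈ U ∧ v ≤ w}) (fun _ h => h.1)
    ⟨hu, hle⟩ fun v ⟨hv, hvw⟩ => ?_
  obtain ⟨v', hv', hv'w, hstep⟩ := hloc.exists_chainStep_le hd hv hvw fun h => hw ⟨v, h⟩
  exact ⟨v', ⟨hv', hv'w⟩, hstep⟩
end

section
/- The Thomas division is an involutive division, and moreover for any finite set U of monomials and any u ∈ U, the Thomas multiplicative variables of u are contained in the Janet multiplicative variables of u: Mult_T^U(u) ⊆ Mult_J^U(u). -/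
/-- The variable `x_i` is Thomas-multiplicative for `u` w.r.t. `U`:
`deg_i(u) = deg_i(U)`. -/
def ThomasMult {n : ℕ} (U : Finset (Fin n → ℕ)) (u : Fin n → ℕ) (i : Fin n) : Prop :=
  ∀ v ∈ U, v i ≤ u i

/-- The Thomas divisibility relation: `u ∈ U` divides `w` and all variables of the
quotient are Thomas-multiplicative for `u` w.r.t. `U`. -/
def ThomasDiv {n : ℕ} (U : Finset (Fin n → ℕ)) (u w : Fin n → ℕ) : Prop :=
  u ∈ U ∧ u ≤ w ∧ ∀ i, u i < w i → ThomasMult U u i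

namespace ThomasMult

variable {n : ℕ} {U U' : Finset (Fin n → ℕ)} {u : Fin n → ℕ} {i : Fin n}

theorem mono (hsub : U' ⊆ U) (h : ThomasMult U u i) : ThomasMult U' u i :=
  fun v hv => h v (hsub hv)

theorem janetMult (h : ThomasMult U u i) : JanetMult U u i :=
  fun v hv _ => h v hv

end ThomasMult

namespace ThomasDiv

variable {n : ℕ} {U U' : Finset (Fin n → ℕ)} {u u' w : Fin n → ℕ}

theorem refl (hu : u ∈ U) : ThomasDiv U u u :=
  ⟨hu, le_rfl, fun _ hi => absurd hi (lt_irrefl _)⟩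

theorem add_right_iff {v : Fin n → ℕ} :
    ThomasDiv U u (u + v) ↔ u ∈ U ∧ ∀ i, 0 < v i → ThomasMult U u i := by
  simp only [ThomasDiv, Pi.add_apply, lt_add_iff_pos_right, le_add_iff_nonneg_right, zero_le,
    true_and]

theorem and_iff_add (v w : Fin n → ℕ) :
    ThomasDiv U u (u + v) ∧ ThomasDiv U u (u + w) ↔ ThomasDiv U u (u + v + w) := by
  simp only [add_assoc, add_right_iff, Pi.add_apply, Nat.add_pos_iff_pos_or_pos, or_imp,
    forall_and]
  exact and_and_left.symm

theorem le_of_mem_of_le (h : ThomasDiv U u w) (hu' : u' ∈ U) (hu'w : u' ≤ w) : u' ≤ u := by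
  intro i
  by_contra! hlt
  exact (h.2.2 i (hlt.trans_le (hu'w i)) u' hu').not_gt hlt

theorem eq_of_thomasDiv (h : ThomasDiv U u w) (h' : ThomasDiv U u' w) : u = u' :=
  le_antisymm (h'.le_of_mem_of_le h.1 h.2.1) (h.le_of_mem_of_le h'.1 h'.2.1)

theorem trans (h : ThomasDiv U u u') (h' : ThomasDiv U u' w) : ThomasDiv U u w := by
  refine ⟨h.1, h.2.1.trans h'.2.1, fun i hi => ?_⟩
  rcases (h.2.1 i).lt_or_eq with hlt | heq
  · exact h.2.2 i hlt
  · exact fun v hv => (h'.2.2 i (heq ▸ hi) v hv).trans_eq heq.symm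

theorem mono (hsub : U' ⊆ U) (hu : u ∈ U') (h : ThomasDiv U u w) : ThomasDiv U' u w :=
  ⟨hu, h.2.1, fun i hi => (h.2.2 i hi).mono hsub⟩

end ThomasDiv

/-- The Thomas division is an involutive division, and the Janet division refines it:
for a finite set of monomials `U` and `u ∈ U`, every Thomas-multiplicative variable of
`u` is Janet-multiplicative. -/
theorem thomas_division_involutive_and_refined_by_janet (n : ℕ) :
    IsInvolutiveDivision n (fun U u w => ThomasDiv U u w) ∧
    ∀ (U : Finset (Fin n → ℕ)) (u : Fin n → ℕ), u ∈ U →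
      ∀ i : Fin n, ThomasMult U u i → JanetMult U u i := by
  refine ⟨⟨fun _ _ _ h => ⟨h.1, h.2.1⟩, fun _ _ => ThomasDiv.refl,
    fun _ _ _ => ThomasDiv.and_iff_add, fun _ _ _ _ h h' => ?_,
    fun _ _ _ _ => ThomasDiv.trans, fun _ _ _ _ => ThomasDiv.mono⟩,
    fun _ _ _ _ => ThomasMult.janetMult⟩
  obtain rfl := ThomasDiv.eq_of_thomasDiv h h'
  exact .inl (ThomasDiv.refl h.1)
end

section
/- The Pommaret division is an involutive division and it is continuous, but it is not noetherian: there exists a finite set of monomials admitting no finite Pommaret completion. -/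
/-- Pommaret multiplicative variables (for the variable order `x_1 > x_2 > … > x_n`,
variables indexed so that `x_{i+1}` corresponds to `i : Fin n`): for
`u = x_1^{α_1}⋯x_k^{α_k}` with `α_k > 0`, the variables `x_j` with `j ≥ k` are
multiplicative; all variables are multiplicative for `u = 1`. This division does not
depend on the reference set of monomials. -/
def PommaretMult {n : ℕ} (u : Fin n → ℕ) (i : Fin n) : Prop :=
  ∀ l, i < l → u l = 0

/-- The Pommaret divisibility relation. -/
def PommaretDiv {n : ℕ} (U : Finset (Fin n → ℕ)) (u w : Fin n → ℕ) : Prop :=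
  u ∈ U ∧ u ≤ w ∧ ∀ i, u i < w i → PommaretMult u i

/-- A division is noetherian if every finite set of monomials admits a finite involutive
completion with the same cone. -/
def IsNoetherianDivision {n : ℕ}
    (d : Finset (Fin n → ℕ) → (Fin n → ℕ) → (Fin n → ℕ) → Prop) : Prop :=
  ∀ U : Finset (Fin n → ℕ), ∃ V : Finset (Fin n → ℕ),
    U ⊆ V ∧ MonCone U = MonCone V ∧ IsInvolutiveSet d V

/- A Pommaret divisor `u = x_1^{α_1}⋯x_k^{α_k}` of `w` agrees with `w` in `x_1, …, x_{k-1}`;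
the involutive-division axioms all come down to this.

Continuity: along a chain `u_{j+1} ∣_P u_j x_{i_j}` with `x_{i_j}` non-multiplicative for
`u_j`, the leading power `x_k^{α_k}` of `u_j` (ordered by class, then exponent) never
increases, and when it stays the same the degree goes up. So the chain is strictly monotone
for a lexicographic key.

Not noetherian: every monomial of a finite completion `V` of `{x_1 x_2}` contains `x_2`, so
`x_1` is non-multiplicative for all of them and `x_1^{m+1} x_2` with `m` beyond the
`x_1`-degrees in `V` has no Pommaret divisor in `V`. -/

section

variable {n : ℕ}

theorem PommaretMult.of_le {u u' : Fin n → ℕ} {i : Fin n} (h : PommaretMult u' i)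
    (hle : u ≤ u') : PommaretMult u i :=
  fun l hl => Nat.eq_zero_of_le_zero (h l hl ▸ hle l)

theorem pommaretDiv_self {U : Finset (Fin n → ℕ)} {u : Fin n → ℕ} (hu : u ∈ U) :
    PommaretDiv U u u :=
  ⟨hu, le_rfl, fun _ hi => absurd hi (lt_irrefl _)⟩

theorem pommaretDiv_add_iff {U : Finset (Fin n → ℕ)} {u v : Fin n → ℕ} :
    PommaretDiv U u (u + v) ↔ u ∈ U ∧ ∀ i, v i ≠ 0 → PommaretMult u i := by
  simp only [PommaretDiv, Pi.add_apply, lt_add_iff_pos_right, Nat.pos_iff_ne_zero,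
    le_add_iff_nonneg_right, zero_le, true_and]

theorem pommaretDiv_add_and_add_iff {U : Finset (Fin n → ℕ)} {u v w : Fin n → ℕ} :
    PommaretDiv U u (u + v) ∧ PommaretDiv U u (u + w) ↔ PommaretDiv U u (u + v + w) := by
  simp only [add_assoc, pommaretDiv_add_iff, Pi.add_apply, ne_eq, Nat.add_eq_zero_iff,
    not_and_or]
  grind

theorem pommaretDiv_add_single_iff {U : Finset (Fin n → ℕ)} {u : Fin n → ℕ} {x : Fin n}
    (hu : u ∈ U) : PommaretDiv U u (u + Pi.single x 1) ↔ PommaretMult u x := by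
  simp [pommaretDiv_add_iff, hu, Pi.single_apply]

theorem PommaretDiv.trans {U : Finset (Fin n → ℕ)} {u u' w : Fin n → ℕ}
    (h : PommaretDiv U u u') (h' : PommaretDiv U u' w) : PommaretDiv U u w := by
  refine ⟨h.1, h.2.1.trans h'.2.1, fun i hi => ?_⟩
  rcases (h.2.1 i).lt_or_eq with hlt | heq
  · exact h.2.2 i hlt
  · exact PommaretMult.of_le (h'.2.2 i (heq ▸ hi)) h.2.1

theorem PommaretDiv.of_mem {U U' : Finset (Fin n → ℕ)} {u w : Fin n → ℕ}
    (h : PommaretDiv U u w) (hu : u ∈ U') : PommaretDiv U' u w :=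
  ⟨hu, h.2⟩

theorem PommaretDiv.or_of_pommaretDiv {U : Finset (Fin n → ℕ)} {u u' w : Fin n → ℕ}
    (h : PommaretDiv U u w) (h' : PommaretDiv U u' w) :
    PommaretDiv U u u' ∨ PommaretDiv U u' u := by
  by_cases hle : u ≤ u'
  · exact .inl ⟨h.1, hle, fun i hi => h.2.2 i (hi.trans_le (h'.2.1 i))⟩
  obtain ⟨i, hi⟩ : ∃ i, u' i < u i := by simpa [Pi.le_def] using hle
  have hmult : PommaretMult u' i := h'.2.2 i (hi.trans_le (h.2.1 i))
  have hle' : u' ≤ u := fun j => le_of_not_gt fun (hj : u j < u' j) => by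
    have hmult' : PommaretMult u j := h.2.2 j (hj.trans_le (h'.2.1 j))
    rcases lt_trichotomy j i with hji | rfl | hij
    · have : u i = 0 := hmult' i hji
      omega
    · omega
    · have : u' j = 0 := hmult j hij
      omega
  exact .inr ⟨h'.1, hle', fun j hj => h'.2.2 j (hj.trans_le (h.2.1 j))⟩

theorem PommaretDiv.apply_eq_of_lt {U : Finset (Fin n → ℕ)} {u w : Fin n → ℕ}
    (h : PommaretDiv U u w) {i l : Fin n} (hl : u l ≠ 0) (hil : i < l) : u i = w i := by
  by_contra hne
  exact hl (h.2.2 i ((h.2.1 i).lt_of_ne hne) l hil)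

/-- The leading power `x_k^{α_k}` of `u`, as the pair `(k - 1, α_k)` (indices of `Fin n` start
at `0`); `⊥` for `u = 1`. -/
def leadingPower (u : Fin n → ℕ) : ℕ ×ₗ ℕ :=
  (Finset.univ.filter fun i => u i ≠ 0).sup fun i => toLex ((i : ℕ), u i)

theorem le_leadingPower {u : Fin n → ℕ} {i : Fin n} (hi : u i ≠ 0) :
    toLex ((i : ℕ), u i) ≤ leadingPower u :=
  Finset.le_sup (f := fun i : Fin n => toLex ((i : ℕ), u i)) (by simpa using hi)

theorem leadingPower_le_iff {u : Fin n → ℕ} {p : ℕ ×ₗ ℕ} :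
    leadingPower u ≤ p ↔ ∀ i : Fin n, u i ≠ 0 → toLex ((i : ℕ), u i) ≤ p := by
  simp [leadingPower]

theorem leadingPower_mono : Monotone (leadingPower (n := n)) := by
  intro u w huw
  refine leadingPower_le_iff.mpr fun i hi => ?_
  have hwi : w i ≠ 0 := ((Nat.pos_of_ne_zero hi).trans_le (huw i)).ne'
  exact (Prod.Lex.toLex_mono (Prod.mk_le_mk.mpr ⟨le_rfl, huw i⟩)).trans (le_leadingPower hwi)

theorem leadingPower_add_single {u : Fin n → ℕ} {x : Fin n} (hx : ¬ PommaretMult u x) :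
    leadingPower (u + Pi.single x 1) = leadingPower u := by
  obtain ⟨l, hxl, hl⟩ : ∃ l, x < l ∧ u l ≠ 0 := by simpa [PommaretMult] using hx
  refine le_antisymm (leadingPower_le_iff.mpr fun i hi => ?_)
    (leadingPower_mono le_self_add)
  by_cases hix : i = x
  · subst hix
    exact (Prod.Lex.toLex_le_toLex.mpr (.inl hxl)).trans (le_leadingPower hl)
  · have hui : u i ≠ 0 := by simpa [hix] using hi
    simpa [hix] using le_leadingPower hui

theorem leadingPower_lt_of_pommaretDiv {U : Finset (Fin n → ℕ)} {u w : Fin n → ℕ}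
    (h : PommaretDiv U u w) (hne : u ≠ w) : leadingPower u < leadingPower w := by
  obtain ⟨i, hi⟩ : ∃ i, u i < w i := by
    by_contra! hge
    exact hne (le_antisymm h.2.1 hge)
  have hmult : PommaretMult u i := h.2.2 i hi
  calc leadingPower u ≤ toLex ((i : ℕ), u i) := leadingPower_le_iff.mpr fun j hj => by
          rcases lt_or_eq_of_le (not_lt.mp fun hij => hj (hmult j hij)) with hji | rfl
          · exact (Prod.Lex.toLex_lt_toLex.mpr (.inl hji)).le
          · exact le_rfl
    _ < toLex ((i : ℕ), w i) := Prod.Lex.toLex_strictMono (Prod.mk_lt_mk_of_le_of_lt le_rfl hi)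
    _ ≤ leadingPower w := le_leadingPower (Nat.zero_le _ |>.trans_lt hi).ne'

def pommaretChainKey (u : Fin n → ℕ) : (ℕ ×ₗ ℕ) ×ₗ ℕᵒᵈ :=
  toLex (leadingPower u, OrderDual.toDual (∑ i, u i))

theorem pommaretChainKey_lt_of_pommaretDiv_add_single {U : Finset (Fin n → ℕ)} {u u' : Fin n → ℕ}
    {x : Fin n} (hx : ¬ PommaretMult u x) (h : PommaretDiv U u' (u + Pi.single x 1)) :
    pommaretChainKey u' < pommaretChainKey u := by
  refine Prod.Lex.toLex_lt_toLex.mpr ?_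
  by_cases heq : u' = u + Pi.single x 1
  · subst heq
    refine .inr ⟨leadingPower_add_single hx, ?_⟩
    exact OrderDual.toDual_lt_toDual.mpr (by simp [Finset.sum_add_distrib])
  · exact .inl ((leadingPower_lt_of_pommaretDiv h heq).trans_eq (leadingPower_add_single hx))

theorem isInvolutiveDivision_pommaretDiv : IsInvolutiveDivision n PommaretDiv :=
  ⟨fun _ _ _ h => ⟨h.1, h.2.1⟩, fun _ _ => pommaretDiv_self,
    fun _ _ _ _ _ => pommaretDiv_add_and_add_iff, fun _ _ _ _ => PommaretDiv.or_of_pommaretDiv,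
    fun _ _ _ _ => PommaretDiv.trans, fun _ _ _ _ _ hu h => PommaretDiv.of_mem h hu⟩

theorem isContinuousDivision_pommaretDiv : IsContinuousDivision (n := n) PommaretDiv := by
  intro U k u x hU hnd hd
  have hanti : StrictAnti (pommaretChainKey ∘ u) := Fin.strictAnti_iff_succ_lt.mpr fun j =>
    pommaretChainKey_lt_of_pommaretDiv_add_single ((pommaretDiv_add_single_iff (hU _)).not.mp (hnd j))
      (hd j)
  exact hanti.injective.of_comp

theorem not_isInvolutiveSet_of_monCone_eq_one {V : Finset (Fin 2 → ℕ)}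
    (hV : MonCone {1} = MonCone V) : ¬ IsInvolutiveSet PommaretDiv V := by
  intro hinv
  have hV1 : ∀ v ∈ V, v 1 ≠ 0 := fun v hv => by
    obtain ⟨t, ht, htv⟩ : v ∈ MonCone {1} := hV ▸ ⟨v, hv, le_rfl⟩
    rw [Finset.mem_singleton.mp ht] at htv
    exact Nat.one_le_iff_ne_zero.mp (htv 1)
  set m := V.sup (· 0)
  have hw : ![m + 1, 1] ∈ MonCone V :=
    hV ▸ ⟨1, Finset.mem_singleton_self _, fun i => by fin_cases i <;> simp⟩
  rw [hinv] at hw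
  obtain ⟨v, hv⟩ := hw
  have hv0 : v 0 = m + 1 := PommaretDiv.apply_eq_of_lt hv (hV1 v hv.1) Fin.zero_lt_one
  have hvm : v 0 ≤ m := Finset.le_sup (f := (· 0)) hv.1
  omega

end

/-- The Pommaret division is an involutive division and is continuous, but it is not
noetherian: there is a finite set of monomials admitting no finite Pommaret
completion. -/
theorem pommaret_involutive_continuous_not_noetherian :
    (∀ n : ℕ, IsInvolutiveDivision n (fun U u w => PommaretDiv U u w)) ∧
    (∀ n : ℕ, IsContinuousDivision (n := n) (fun U u w => PommaretDiv U u w)) ∧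
    (∃ (n : ℕ) (U : Finset (Fin n → ℕ)),
      ¬ ∃ V : Finset (Fin n → ℕ),
        U ⊆ V ∧ MonCone U = MonCone V ∧
          IsInvolutiveSet (fun U u w => PommaretDiv U u w) V) :=
  ⟨fun _ => isInvolutiveDivision_pommaretDiv, fun _ => isContinuousDivision_pommaretDiv, 2, {1},
    fun ⟨_, _, hcone, hinv⟩ => not_isInvolutiveSet_of_monCone_eq_one hcone hinv⟩
end
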